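/- With the setup of the discrete COS method (p̂_X defined from the characteristic function as above), the approximation always overestimates the true PMF: for every n with 0 ≤ n ≤ N-1, p̂_X(n) ≥ p_X(n). -/

import Mathlib

/-!
Write `θₘ = π(2m+1)/(2N)`. Since `Aₖ = (2/N) Σₘ p(m) cos(kθₘ)`, we get `N p̂(n) = Σₘ p(m) K(m,n)` with
`K(m,n) = 1 + 2 Σ_{k=1}^{N-1} cos(kθₘ) cos(kθₙ)`. By product-to-sum, `K(m,n) = S(m-n) + S(m+n+1) - 1`,
where `S(j) = Σ_{k<N} cos(kjπ/N)` is the real part of a geometric sum of the `2N`-th root of unity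
`e^{ijπ/N}`: `S(j) = 1` for odd `j`, `S(j) ≥ 0` for even `j`, and `S(0) = N`. Exactly one of `m - n` and
`m + n + 1` is odd, so `K ≥ 0` and `K(n,n) = N`; hence `N p̂(n) ≥ p(n) K(n,n) = N p(n)`.
-/

open Real Finset

open Complex in
theorem re_geom_sum_eq_one_of_pow_eq_neg_one {x : ℂ} {N : ℕ} (hx : ‖x‖ = 1) (h : x ^ N = -1) :
    (∑ k ∈ range N, x ^ k).re = 1 := by
  have hx1 : x ≠ 1 := by
    rintro rfl
    norm_num at h
  have hnormSq : x.re ^ 2 + x.im ^ 2 = 1 := by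
    rw [sq, sq, ← normSq_apply, normSq_eq_norm_sq, hx, one_pow]
  have hre : x.re ≠ 1 := by
    intro hre
    exact hx1 (Complex.ext hre (by simp only [one_im]; nlinarith))
  rw [geom_sum_eq hx1, h, div_re, normSq_apply]
  simp only [sub_re, sub_im, one_re, one_im, neg_re, neg_im]
  have hre1 : x.re - 1 ≠ 0 := sub_ne_zero.mpr hre
  field_simp
  nlinarith

open Complex in
theorem re_geom_sum_nonneg_of_pow_eq_one {x : ℂ} {N : ℕ} (h : x ^ N = 1) :
    0 ≤ (∑ k ∈ range N, x ^ k).re := by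
  by_cases hx : x = 1
  · simp [hx]
  · rw [geom_sum_eq hx, h, sub_self, zero_div, zero_re]

theorem sum_range_cos_mul_eq_re_geom_sum (N : ℕ) (θ : ℝ) :
    ∑ k ∈ range N, cos (k * θ) = (∑ k ∈ range N, Complex.exp (θ * Complex.I) ^ k).re := by
  rw [Complex.re_sum]
  refine sum_congr rfl fun k _ => ?_
  rw [← Complex.exp_nat_mul, ← mul_assoc, ← Complex.ofReal_natCast, ← Complex.ofReal_mul,
    Complex.exp_ofReal_mul_I_re]

theorem exp_int_mul_pi_div_mul_I_pow {N : ℕ} (hN : N ≠ 0) (j : ℤ) :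
    Complex.exp ((j * π / N : ℝ) * Complex.I) ^ N = (-1) ^ j := by
  rw [← Complex.exp_nat_mul, ← Complex.exp_pi_mul_I, ← Complex.exp_int_mul]
  congr 1
  push_cast
  field_simp

theorem sum_range_cos_int_mul_pi_div_nonneg {N : ℕ} (hN : N ≠ 0) {j : ℤ} (hj : Even j) :
    0 ≤ ∑ k ∈ range N, cos (k * (j * π / N)) := by
  rw [sum_range_cos_mul_eq_re_geom_sum]
  exact re_geom_sum_nonneg_of_pow_eq_one (by rw [exp_int_mul_pi_div_mul_I_pow hN, hj.neg_one_zpow])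

theorem sum_range_cos_int_mul_pi_div_of_odd {N : ℕ} (hN : N ≠ 0) {j : ℤ} (hj : Odd j) :
    ∑ k ∈ range N, cos (k * (j * π / N)) = 1 := by
  rw [sum_range_cos_mul_eq_re_geom_sum]
  exact re_geom_sum_eq_one_of_pow_eq_neg_one (Complex.norm_exp_ofReal_mul_I _)
    (by rw [exp_int_mul_pi_div_mul_I_pow hN, hj.neg_one_zpow])

theorem one_add_two_mul_sum_Icc_cos_mul_cos {N : ℕ} (hN : N ≠ 0) (α β : ℝ) :
    1 + 2 * ∑ k ∈ Icc 1 (N - 1), cos (k * α) * cos (k * β)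
      = ∑ k ∈ range N, cos (k * (α - β)) + ∑ k ∈ range N, cos (k * (α + β)) - 1 := by
  have hIcc : Icc 1 (N - 1) = Ico 1 N := by
    ext k; simp only [mem_Icc, mem_Ico]; omega
  have hprod : ∀ k : ℕ, 2 * (cos (k * α) * cos (k * β)) = cos (k * (α - β)) + cos (k * (α + β)) := by
    intro k
    rw [mul_sub, mul_add, cos_sub, cos_add]
    ring
  rw [← sum_add_distrib, range_eq_Ico, sum_eq_sum_Ico_succ_bot (Nat.pos_of_ne_zero hN), hIcc,
    mul_sum, ← sum_congr rfl fun k _ => hprod k]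
  simp only [CharP.cast_eq_zero, zero_mul, cos_zero, zero_add]
  ring

noncomputable def dctNode (N m : ℕ) : ℝ := π * (2 * m + 1) / (2 * N)

noncomputable def dctKernel (N m n : ℕ) : ℝ :=
  1 + 2 * ∑ k ∈ Icc 1 (N - 1), cos (k * dctNode N m) * cos (k * dctNode N n)

theorem dctKernel_eq {N : ℕ} (hN : N ≠ 0) (m n : ℕ) :
    dctKernel N m n = ∑ k ∈ range N, cos (k * (((m - n : ℤ) : ℝ) * π / N))
      + ∑ k ∈ range N, cos (k * (((m + n + 1 : ℤ) : ℝ) * π / N)) - 1 := by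
  rw [dctKernel, one_add_two_mul_sum_Icc_cos_mul_cos hN, dctNode, dctNode]
  have hN' : (N : ℝ) ≠ 0 := Nat.cast_ne_zero.mpr hN
  congr 4 <;> ext k <;> congr 2 <;> push_cast <;> field_simp <;> ring

theorem dctKernel_nonneg {N : ℕ} (hN : N ≠ 0) (m n : ℕ) : 0 ≤ dctKernel N m n := by
  rw [dctKernel_eq hN]
  rcases Int.even_or_odd ((m : ℤ) - n) with hdiff | hdiff
  · have hsum : Odd ((m : ℤ) + n + 1) := by
      obtain ⟨t, ht⟩ := hdiff; exact ⟨n + t, by omega⟩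
    have := sum_range_cos_int_mul_pi_div_nonneg hN hdiff
    rw [sum_range_cos_int_mul_pi_div_of_odd hN hsum]
    linarith
  · have hsum : Even ((m : ℤ) + n + 1) := by
      obtain ⟨t, ht⟩ := hdiff; exact ⟨n + t + 1, by omega⟩
    have := sum_range_cos_int_mul_pi_div_nonneg hN hsum
    rw [sum_range_cos_int_mul_pi_div_of_odd hN hdiff]
    linarith

theorem dctKernel_self {N : ℕ} (hN : N ≠ 0) (n : ℕ) : dctKernel N n n = N := by
  rw [dctKernel_eq hN, sum_range_cos_int_mul_pi_div_of_odd hN (j := n + n + 1) ⟨n, by ring⟩]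
  simp

theorem summable_mul_cos {p : ℕ → ℝ} (hp : Summable p) (f : ℕ → ℝ) :
    Summable fun m => p m * cos (f m) :=
  hp.abs.of_norm_bounded fun m => by
    rw [norm_mul, norm_eq_abs, norm_eq_abs]
    exact mul_le_of_le_one_right (abs_nonneg _) (abs_cos_le_one _)

theorem re_tsum_mul_exp_mul_exp {p : ℕ → ℝ} (hp : Summable p) (u φ : ℝ) :
    ((∑' m : ℕ, (p m : ℂ) * Complex.exp (Complex.I * u * m)) * Complex.exp (Complex.I * φ)).re
      = ∑' m, p m * cos (u * m + φ) := by
  have hterm : ∀ m : ℕ, (p m : ℂ) * Complex.exp (Complex.I * u * m) * Complex.exp (Complex.I * φ)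
      = p m * Complex.exp ((u * m + φ : ℝ) * Complex.I) := by
    intro m
    rw [mul_assoc, ← Complex.exp_add]
    push_cast
    ring_nf
  have hsummable : Summable fun m : ℕ => (p m : ℂ) * Complex.exp ((u * m + φ : ℝ) * Complex.I) :=
    hp.abs.of_norm_bounded fun m => by
      rw [norm_mul, Complex.norm_exp_ofReal_mul_I, mul_one, Complex.norm_real, norm_eq_abs]
  rw [← tsum_mul_right, tsum_congr hterm, Complex.re_tsum hsummable]
  simp only [Complex.re_ofReal_mul, Complex.exp_ofReal_mul_I_re]

theorem hasSum_mul_dctKernel {p : ℕ → ℝ} (hp : Summable p) (N n : ℕ) :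
    HasSum (fun m => p m * dctKernel N m n) (∑' m, p m + 2 * ∑ k ∈ Icc 1 (N - 1),
      (∑' m, p m * cos (k * dctNode N m)) * cos (k * dctNode N n)) := by
  have hcoeff := hasSum_sum (s := Icc 1 (N - 1)) fun (k : ℕ) _ =>
    (summable_mul_cos hp fun m => k * dctNode N m).hasSum.mul_right (cos (k * dctNode N n))
  convert hp.hasSum.add (hcoeff.mul_left 2) using 1
  ext m
  simp only [dctKernel, mul_add, mul_one, mul_sum]
  congr 1
  exact sum_congr rfl fun k _ => by ring

theorem stmt3_general (p : ℕ → ℝ) (hp : ∀ n, 0 ≤ p n) (hsum : HasSum p 1)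
    (N : ℕ) (hN : 1 ≤ N) (n : ℕ)
    (ψ : ℝ → ℂ) (hψ : ∀ u, ψ u = ∑' m : ℕ, (p m : ℂ) * Complex.exp (Complex.I * u * m))
    (A : ℕ → ℝ)
    (hA : ∀ k, A k = (2 / N) * (ψ (k * π / N) * Complex.exp (Complex.I * k * π / (2 * N))).re)
    (phat : ℕ → ℝ)
    (hphat : ∀ m, phat m = A 0 / 2 +
      ∑ k ∈ Finset.Icc 1 (N - 1), A k * Real.cos (k * π * (2 * m + 1) / (2 * N))) :
    p n ≤ phat n := by
  have hN0 : N ≠ 0 := by omega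
  have hNpos : (0 : ℝ) < N := by exact_mod_cast hN
  have hA' : ∀ k : ℕ, A k = 2 / N * ∑' m, p m * cos (k * dctNode N m) := by
    intro k
    have hφ : Complex.I * k * π / (2 * N) = Complex.I * (k * π / (2 * N) : ℝ) := by
      push_cast; ring
    rw [hA, hψ, hφ, re_tsum_mul_exp_mul_exp hsum.summable]
    congr 2 with m
    rw [dctNode]
    ring_nf
  have hnode : ∀ k m : ℕ, (k : ℝ) * π * (2 * m + 1) / (2 * N) = k * dctNode N m := by
    intro k m
    rw [dctNode]
    ring
  have hphat' : phat n * N = ∑' m, p m + 2 * ∑ k ∈ Icc 1 (N - 1),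
      (∑' m, p m * cos (k * dctNode N m)) * cos (k * dctNode N n) := by
    simp only [hphat, hnode, hA', CharP.cast_eq_zero, zero_mul, cos_zero, mul_one]
    rw [add_mul, sum_mul, mul_sum]
    congr 1
    · field_simp
    · exact sum_congr rfl fun k _ => by field_simp
  have hker := hasSum_mul_dctKernel hsum.summable N n
  refine le_of_mul_le_mul_right ?_ hNpos
  calc p n * N = p n * dctKernel N n n := by rw [dctKernel_self hN0]
    _ ≤ ∑' m, p m * dctKernel N m n :=
      hker.summable.le_tsum n fun m _ => mul_nonneg (hp m) (dctKernel_nonneg hN0 m n)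
    _ = phat n * N := by rw [hker.tsum_eq, hphat']

theorem stmt3 (p : ℕ → ℝ) (hp : ∀ n, 0 ≤ p n) (hsum : HasSum p 1)
    (N : ℕ) (hN : 1 ≤ N) (n : ℕ) (hn : n ≤ N - 1)
    (ψ : ℝ → ℂ) (hψ : ∀ u, ψ u = ∑' m : ℕ, (p m : ℂ) * Complex.exp (Complex.I * u * m))
    (A : ℕ → ℝ)
    (hA : ∀ k, A k = (2 / N) * (ψ (k * π / N) * Complex.exp (Complex.I * k * π / (2 * N))).re)
    (phat : ℕ → ℝ)
    (hphat : ∀ m, phat m = A 0 / 2 +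
      ∑ k ∈ Finset.Icc 1 (N - 1), A k * Real.cos (k * π * (2 * m + 1) / (2 * N))) :
    p n ≤ phat n :=
  stmt3_general p hp hsum N hN n ψ hψ A hA phat hphat
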